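/- In the setting of the double Dirichlet factorization S(A,B) = D_{N_H}(kA/2) · D_{N_V}(kB/2) with k = 2π/λ: if η₁₁ = 0, η₂₁ = 0, η₁₂ = η₂₂ = η ≠ 0, and |N_H η / λ| = 1, then for all pairs of distinct double-indices (u₁,u₂) ≠ (v₁,v₂) with 0 ≤ u₁,v₁ ≤ M_H−1, 0 ≤ u₂,v₂ ≤ M_V−1, M_H ≤ N_H, M_V ≤ N_V, and |u₂ − v₂| not a multiple of N_H, the correlation S vanishes: S(η(v₂−u₂), η(v₂−u₂)) contributes zero whenever u₂ ≠ v₂. -/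

import Mathlib

/-!
Write `θ = k η (v₂ - u₂)`. The double sum factors into a geometric sum over `n₁` times one over
`n₂`. Since `k = 2π/λ` and `N_H η / λ = ±1`, the ratio `exp (iθ)` of the first geometric sum is an
`N_H`-th root of unity, and it is not `1` because `N_H ∤ v₂ - u₂`; so the first factor vanishes.
-/

open Real Complex Finset

theorem exp_mul_I_pow_eq_one_of_mul_eq_two_pi_mul_int {θ : ℝ} {N : ℕ} {m : ℤ}
    (hθ : N * θ = 2 * π * m) : Complex.exp (I * θ) ^ N = 1 := by
  rw [← Complex.exp_nat_mul, ← Complex.exp_int_mul_two_pi_mul_I m]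
  congr 1
  have hθ' := congrArg ((↑) : ℝ → ℂ) hθ
  push_cast at hθ'
  linear_combination I * hθ'

theorem exp_mul_I_ne_one_of_mul_eq_two_pi_mul_int {θ : ℝ} {N : ℕ} {m : ℤ}
    (hθ : N * θ = 2 * π * m) (hm : ¬ (N : ℤ) ∣ m) : Complex.exp (I * θ) ≠ 1 := by
  intro h
  obtain ⟨n, hn⟩ := Complex.exp_eq_one_iff.mp h
  have hθn : θ = n * (2 * π) := by
    apply Complex.ofReal_injective
    push_cast
    linear_combination -I * hn + (θ - n * (2 * π)) * I_sq
  have hmn : (m : ℝ) = (n * N : ℤ) := by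
    push_cast
    nlinarith [Real.pi_pos]
  exact hm ⟨n, by rw [Int.cast_inj.mp hmn, mul_comm]⟩

theorem sum_range_exp_eq_zero_of_mul_eq_two_pi_mul_int {θ : ℝ} {N : ℕ} {m : ℤ}
    (hθ : N * θ = 2 * π * m) (hm : ¬ (N : ℤ) ∣ m) (c : ℂ) :
    ∑ n ∈ range N, Complex.exp (I * θ * (n - c)) = 0 := by
  have hterm (n : ℕ) :
      Complex.exp (I * θ * (n - c)) = Complex.exp (I * θ) ^ n * Complex.exp (-(I * θ * c)) := by
    rw [← Complex.exp_nat_mul, ← Complex.exp_add]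
    ring_nf
  simp_rw [hterm, ← sum_mul,
    geom_sum_eq (exp_mul_I_ne_one_of_mul_eq_two_pi_mul_int hθ hm),
    exp_mul_I_pow_eq_one_of_mul_eq_two_pi_mul_int hθ, sub_self, zero_div, zero_mul]

theorem parallel_panels_orthogonality_general (NH NV : ℕ)
    (lam η k : ℝ) (hk : k = 2 * π / lam)
    (hcrit : |(NH : ℝ) * η / lam| = 1)
    (u₂ v₂ : ℕ)
    (hnd : ¬ (NH : ℤ) ∣ ((u₂ : ℤ) - (v₂ : ℤ))) :
    ∑ n₁ ∈ Finset.range NH, ∑ n₂ ∈ Finset.range NV,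
        Complex.exp (Complex.I * k *
          ((η * ((v₂ : ℝ) - (u₂ : ℝ))) * ((n₁ : ℝ) - ((NH : ℝ) - 1) / 2) +
           (η * ((v₂ : ℝ) - (u₂ : ℝ))) * ((n₂ : ℝ) - ((NV : ℝ) - 1) / 2))) = 0 := by
  set θ : ℝ := k * (η * ((v₂ : ℝ) - u₂))
  have hθ : NH * θ = 2 * π * (NH * η / lam) * ((v₂ - u₂ : ℤ) : ℝ) := by
    simp only [θ, hk]; push_cast; ring
  have hΔ : ¬ (NH : ℤ) ∣ (v₂ - u₂ : ℤ) := by rwa [← dvd_neg, neg_sub]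
  obtain ⟨m, hm, hmΔ⟩ : ∃ m : ℤ, NH * θ = 2 * π * m ∧ ¬ (NH : ℤ) ∣ m := by
    rcases (abs_eq zero_le_one).mp hcrit with h | h <;> rw [h] at hθ
    · exact ⟨_, by linear_combination hθ, hΔ⟩
    · exact ⟨-(v₂ - u₂ : ℤ), by rw [Int.cast_neg]; linear_combination hθ, by rwa [dvd_neg]⟩
  have hsplit (n₁ n₂ : ℕ) :
      Complex.exp (I * k * (η * ((v₂ : ℝ) - (u₂ : ℝ)) * ((n₁ : ℝ) - ((NH : ℝ) - 1) / 2) +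
          η * ((v₂ : ℝ) - (u₂ : ℝ)) * ((n₂ : ℝ) - ((NV : ℝ) - 1) / 2))) =
        Complex.exp (I * θ * (n₁ - ((NH : ℂ) - 1) / 2)) *
          Complex.exp (I * θ * (n₂ - ((NV : ℂ) - 1) / 2)) := by
    rw [← Complex.exp_add]
    push_cast [θ]
    ring_nf
  simp_rw [hsplit, ← sum_mul_sum,
    sum_range_exp_eq_zero_of_mul_eq_two_pi_mul_int hm hmΔ, zero_mul]

theorem parallel_panels_orthogonality (NH NV MH MV : ℕ)
    (hNH : 1 ≤ NH) (hNV : 1 ≤ NV) (hMH : MH ≤ NH) (hMV : MV ≤ NV)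
    (lam η k : ℝ) (hlam : 0 < lam) (hk : k = 2 * π / lam) (hη : η ≠ 0)
    (hcrit : |(NH : ℝ) * η / lam| = 1)
    (u₁ u₂ v₁ v₂ : ℕ)
    (hu₁ : u₁ ≤ MH - 1) (hv₁ : v₁ ≤ MH - 1) (hu₂ : u₂ ≤ MV - 1) (hv₂ : v₂ ≤ MV - 1)
    (hne : (u₁, u₂) ≠ (v₁, v₂)) (hne₂ : u₂ ≠ v₂)
    (hnd : ¬ (NH : ℤ) ∣ ((u₂ : ℤ) - (v₂ : ℤ))) :
    ∑ n₁ ∈ Finset.range NH, ∑ n₂ ∈ Finset.range NV,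
        Complex.exp (Complex.I * k *
          ((η * ((v₂ : ℝ) - (u₂ : ℝ))) * ((n₁ : ℝ) - ((NH : ℝ) - 1) / 2) +
           (η * ((v₂ : ℝ) - (u₂ : ℝ))) * ((n₂ : ℝ) - ((NV : ℝ) - 1) / 2))) = 0 :=
  parallel_panels_orthogonality_general NH NV lam η k hk hcrit u₂ v₂ hnd
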